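/- Let S be a nonempty finite type, G : S × S → ℝ a matrix with nonnegative off-diagonal entries, ψ : S → ℝ strictly positive, t > 0, m_s := exp(sG)ψ, P_{r,s}f(x) := (exp((s−r)G)(m_{t−s}·f))(x)/m_{t−r}(x) for 0 ≤ r ≤ s ≤ t, and A_s f(x) := (G(m_{t−s}·f)(x) − (Gm_{t−s})(x)·f(x))/m_{t−s}(x). Then: (i) for every fixed r ∈ [0,t], every f : S → ℝ and x ∈ S, the map s ↦ P_{r,s}f(x) is differentiable on [r,t] with derivative d/ds P_{r,s}f(x) = P_{r,s}(A_s f)(x), and P_{r,r} = id; (ii) uniqueness: if (U_{r,s})_{r ≤ s ≤ t} is any family of linear operators on ℝ^S such that U_{r,r} = id and, for every f and x, s ↦ U_{r,s}f(x) is differentiable on [r,t] with d/ds U_{r,s}f(x) = U_{r,s}(A_s f)(x), then U_{r,s} = P_{r,s} for all r ≤ s ≤ t. -/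

import Mathlib

/-!
With `D_u` the multiplication by `m_{t-u}`, `P_{r,s} = D_{t-r}⁻¹ exp((s-r)G) D_{t-s}`. Since
`m' = G m`, differentiating in `s` gives the forward equation `∂_s P_{r,s} = P_{r,s} A_s`, and
differentiating in `r` the backward equation `∂_r P_{r,s} = -A_r P_{r,s}`. For uniqueness, the
product rule makes `u ↦ U_{r,u} P_{u,s} f` have derivative `U_{r,u} A_u P_{u,s} f - U_{r,u} A_u
P_{u,s} f = 0` on `[r,s]`, and its values at `u = r` and `u = s` are `P_{r,s} f` and `U_{r,s} f`.
Dividing by `m` is legitimate because `exp(uG) = exp(-uc) exp(u(G + c))` with `G + c`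
entrywise nonnegative for large `c`, so `exp(uG) ψ ≥ exp(-uc) ψ > 0`.
-/

open NormedSpace

theorem hasDerivWithinAt_linearMap_apply {𝕜 ι F : Type*} [NontriviallyNormedField 𝕜]
    [Fintype ι] [DecidableEq ι] [NormedAddCommGroup F] [NormedSpace 𝕜 F]
    {U : 𝕜 → (ι → 𝕜) →ₗ[𝕜] F} {U' : (ι → 𝕜) →ₗ[𝕜] F} {g : 𝕜 → ι → 𝕜} {g' : ι → 𝕜}
    {s : Set 𝕜} {u : 𝕜} (hU : ∀ f, HasDerivWithinAt (fun v => U v f) (U' f) s u)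
    (hg : HasDerivWithinAt g g' s u) :
    HasDerivWithinAt (fun v => U v (g v)) (U' (g u) + U u g') s u := by
  have h := HasDerivWithinAt.fun_sum (u := Finset.univ) fun i _ =>
    (hasDerivWithinAt_pi.1 hg i).smul (hU fun j => if i = j then 1 else 0)
  convert h using 1
  · exact funext fun v => LinearMap.pi_apply_eq_sum_univ (U v) (g v)
  · rw [Finset.sum_add_distrib, ← LinearMap.pi_apply_eq_sum_univ,
      ← LinearMap.pi_apply_eq_sum_univ]

namespace Matrix

variable {S : Type*} [Fintype S]

theorem mulVec_nonneg {H : Matrix S S ℝ} (hH : ∀ i j, 0 ≤ H i j) {v : S → ℝ} (hv : 0 ≤ v) :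
    0 ≤ H *ᵥ v :=
  fun i => Finset.sum_nonneg fun j _ => mul_nonneg (hH i j) (hv j)

variable [DecidableEq S]

theorem pow_mulVec_nonneg {H : Matrix S S ℝ} (hH : ∀ i j, 0 ≤ H i j) {v : S → ℝ}
    (hv : 0 ≤ v) (n : ℕ) : 0 ≤ H ^ n *ᵥ v := by
  induction n with
  | zero => simpa using hv
  | succ n ih => rw [pow_succ', ← mulVec_mulVec]; exact mulVec_nonneg hH ih

theorem le_exp_mulVec {H : Matrix S S ℝ} (hH : ∀ i j, 0 ≤ H i j) {v : S → ℝ} (hv : 0 ≤ v) :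
    v ≤ exp H *ᵥ v := by
  open scoped Matrix.Norms.Operator in
  let evalAt : Matrix S S ℝ →L[ℝ] S → ℝ :=
    LinearMap.toContinuousLinearMap ((mulVecBilin ℝ ℝ).flip v)
  have hsum : Summable fun n : ℕ => ((n.factorial : ℝ)⁻¹ • H ^ n) *ᵥ v :=
    (expSeries_summable' (𝕂 := ℝ) H).mapL evalAt
  have hexp : exp H *ᵥ v = ∑' n : ℕ, ((n.factorial : ℝ)⁻¹ • H ^ n) *ᵥ v := by
    rw [exp_eq_tsum ℝ]
    exact evalAt.map_tsum (expSeries_summable' H)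
  rw [hexp]
  simpa using hsum.le_tsum 0 fun n _ => by
    rw [smul_mulVec]; exact smul_nonneg (by positivity) (pow_mulVec_nonneg hH hv n)

theorem exp_smul_one (a : ℝ) : exp (a • (1 : Matrix S S ℝ)) = diagonal fun _ => Real.exp a := by
  rw [← diagonal_one, ← diagonal_smul, exp_diagonal]
  simp [Pi.exp_def, ← Real.exp_eq_exp_ℝ]

theorem exp_smul_mulVec_pos {G : Matrix S S ℝ} (hG : ∀ i j, i ≠ j → 0 ≤ G i j) {ψ : S → ℝ}
    (hψ : ∀ i, 0 < ψ i) {u : ℝ} (hu : 0 ≤ u) (x : S) : 0 < (exp (u • G) *ᵥ ψ) x := by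
  set c := ∑ i, |G i i|
  set H := u • (G + c • 1)
  have hH : ∀ i j, 0 ≤ H i j := by
    intro i j
    refine mul_nonneg hu ?_
    rcases eq_or_ne i j with rfl | hij
    · have := Finset.single_le_sum (fun j _ => abs_nonneg (G j j)) (Finset.mem_univ i)
      simp only [Matrix.add_apply, Matrix.smul_apply, one_apply_eq, smul_eq_mul, mul_one]
      linarith [neg_abs_le (G i i)]
    · simpa [one_apply_ne hij] using hG i j hij
  have hsplit : u • G = (-(u * c)) • 1 + H := by
    simp only [H, smul_add, smul_smul]; module
  rw [hsplit, exp_add_of_commute _ _ ((Commute.one_left H).smul_left _), exp_smul_one,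
    ← mulVec_mulVec, mulVec_diagonal]
  exact mul_pos (Real.exp_pos _) ((hψ x).trans_le (le_exp_mulVec hH (fun i => (hψ i).le) x))

theorem mulVec_exp_smul_mulVec (G : Matrix S S ℝ) (a : ℝ) (w : S → ℝ) :
    G *ᵥ (exp (a • G) *ᵥ w) = exp (a • G) *ᵥ (G *ᵥ w) := by
  open scoped Matrix.Norms.Operator in
  rw [mulVec_mulVec, mulVec_mulVec, ((Commute.refl G).smul_right a).exp_right.eq]

theorem hasDerivAt_exp_smul_mulVec (G : Matrix S S ℝ) {φ : ℝ → ℝ} {φ' : ℝ}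
    {w : ℝ → S → ℝ} {w' : S → ℝ} {u : ℝ} (hφ : HasDerivAt φ φ' u) (hw : HasDerivAt w w' u) :
    HasDerivAt (fun v => exp (φ v • G) *ᵥ w v) (exp (φ u • G) *ᵥ (φ' • G *ᵥ w u + w')) u := by
  open scoped Matrix.Norms.Operator in
  have hexp := (hasDerivAt_exp_smul_const G (φ u)).scomp u hφ
  refine ((mulVecBilin ℝ ℝ).toContinuousBilinearMap.hasDerivAt_of_bilinear
    (fun _ => hexp) (fun _ => hw)).congr_deriv ?_
  simp only [LinearMap.toContinuousBilinearMap_apply, mulVecBilin_apply, Function.comp_apply]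
  rw [smul_mulVec, ← mulVec_mulVec, mulVec_add, mulVec_smul, add_comm]
  rfl

end Matrix

open Matrix

section Spine

variable {S : Type*} [Fintype S]

noncomputable def doobGenerator (G : Matrix S S ℝ) (μ : S → ℝ) : (S → ℝ) →ₗ[ℝ] S → ℝ where
  toFun f := (G *ᵥ (μ * f) - (G *ᵥ μ) * f) / μ
  map_add' f g := by
    ext x
    simp only [mul_add, mulVec_add, Pi.add_apply, Pi.div_apply, Pi.sub_apply, Pi.mul_apply]
    ring
  map_smul' c f := by
    ext x
    simp only [mul_smul_comm, mulVec_smul, Pi.smul_apply, Pi.div_apply, Pi.sub_apply,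
      Pi.mul_apply, smul_eq_mul, RingHom.id_apply]
    ring

theorem doobGenerator_apply (G : Matrix S S ℝ) (μ f : S → ℝ) :
    doobGenerator G μ f = (G *ᵥ (μ * f) - (G *ᵥ μ) * f) / μ := rfl

theorem mul_doobGenerator (G : Matrix S S ℝ) {μ : S → ℝ} (hμ : ∀ x, μ x ≠ 0) (f : S → ℝ) :
    μ * doobGenerator G μ f = G *ᵥ (μ * f) - (G *ᵥ μ) * f :=
  funext fun x => mul_div_cancel₀ _ (hμ x)

variable [DecidableEq S]

noncomputable def spinePropagator (G : Matrix S S ℝ) (m : ℝ → S → ℝ) (t r s : ℝ)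
    (f : S → ℝ) : S → ℝ :=
  (exp ((s - r) • G) *ᵥ (m (t - s) * f)) / m (t - r)

variable {G : Matrix S S ℝ} {m : ℝ → S → ℝ} {t : ℝ}

theorem spinePropagator_self {r : ℝ} (hμ : ∀ x, m (t - r) x ≠ 0) (f : S → ℝ) :
    spinePropagator G m t r r f = f :=
  funext fun x => by simp [spinePropagator, hμ x]

theorem hasDerivAt_spinePropagator_right {s : ℝ} (hm : HasDerivAt m (G *ᵥ m (t - s)) (t - s))
    (hμ : ∀ x, m (t - s) x ≠ 0) (r : ℝ) (f : S → ℝ) :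
    HasDerivAt (fun u => spinePropagator G m t r u f)
      (spinePropagator G m t r s (doobGenerator G (m (t - s)) f)) s := by
  have hw : HasDerivAt (fun u => m (t - u) * f) (-(G *ᵥ m (t - s)) * f) s :=
    (hm.comp_const_sub t s).mul_const f
  have hnum := hasDerivAt_exp_smul_mulVec G ((hasDerivAt_id' s).sub_const r) hw
  refine hasDerivAt_pi.2 fun x =>
    ((hasDerivAt_pi.1 hnum x).div_const (m (t - r) x)).congr_deriv ?_
  rw [spinePropagator, mul_doobGenerator G hμ, one_smul, neg_mul, sub_eq_add_neg]
  rfl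

theorem hasDerivAt_spinePropagator_left {u : ℝ} (hm : HasDerivAt m (G *ᵥ m (t - u)) (t - u))
    (hμ : ∀ x, m (t - u) x ≠ 0) (s : ℝ) (f : S → ℝ) :
    HasDerivAt (fun v => spinePropagator G m t v s f)
      (-doobGenerator G (m (t - u)) (spinePropagator G m t u s f)) u := by
  have hnum := hasDerivAt_exp_smul_mulVec G ((hasDerivAt_id' u).const_sub s)
    (hasDerivAt_const u (m (t - s) * f))
  refine hasDerivAt_pi.2 fun x => ((hasDerivAt_pi.1 hnum x).div
    (hasDerivAt_pi.1 (hm.comp_const_sub t u) x) (hμ x)).congr_deriv ?_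
  rw [neg_one_smul, add_zero, mulVec_neg, ← mulVec_exp_smul_mulVec, spinePropagator,
    doobGenerator_apply]
  set n := exp ((s - u) • G) *ᵥ (m (t - s) * f)
  have hcancel : m (t - u) * (n / m (t - u)) = n := funext fun y => mul_div_cancel₀ _ (hμ y)
  simp only [hcancel, Pi.neg_apply, Pi.div_apply, Pi.sub_apply, Pi.mul_apply]
  field_simp [hμ x]
  ring

theorem eq_spinePropagator_of_hasDerivWithinAt (hm : ∀ u, HasDerivAt m (G *ᵥ m u) u)
    (hμ : ∀ u, 0 ≤ u → ∀ x, m u x ≠ 0) {r : ℝ} {U : ℝ → (S → ℝ) →ₗ[ℝ] S → ℝ}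
    (hU₀ : U r = LinearMap.id)
    (hU : ∀ f x, ∀ s ∈ Set.Icc r t, HasDerivWithinAt (fun u => U u f x)
      (U s (doobGenerator G (m (t - s)) f) x) (Set.Icc r t) s)
    {s : ℝ} (hs : s ∈ Set.Icc r t) (f : S → ℝ) :
    U s f = spinePropagator G m t r s f := by
  funext x
  have hderiv : ∀ u ∈ Set.Icc r s,
      HasDerivWithinAt (fun v => U v (spinePropagator G m t v s f) x) 0 (Set.Icc r s) u := by
    intro u hu
    have hμu := hμ (t - u) (by linarith [hu.2, hs.2])
    have := hasDerivWithinAt_linearMap_apply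
      (U := fun v => LinearMap.proj x ∘ₗ U v)
      (U' := LinearMap.proj x ∘ₗ U u ∘ₗ doobGenerator G (m (t - u)))
      (fun g => (hU g x u ⟨hu.1, hu.2.trans hs.2⟩).mono (Set.Icc_subset_Icc_right hs.2))
      (hasDerivAt_spinePropagator_left (hm (t - u)) hμu s f).hasDerivWithinAt
    simpa using this
  have hconst := constant_of_has_deriv_right_zero
    (fun u hu => (hderiv u hu).continuousWithinAt)
    (fun u hu => (hderiv u (Set.Ico_subset_Icc_self hu)).mono_of_mem_nhdsWithin
      (Icc_mem_nhdsGE_of_mem hu)) s (Set.right_mem_Icc.2 hs.1)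
  simpa [spinePropagator_self (hμ _ (sub_nonneg.2 hs.2)),
    spinePropagator_self (hμ _ (sub_nonneg.2 (hs.1.trans hs.2))), hU₀] using hconst

end Spine

theorem inhomogeneous_semigroup_evolution_and_uniqueness_general
    {S : Type*} [Fintype S] [DecidableEq S]
    (G : Matrix S S ℝ) (hG : ∀ x y : S, x ≠ y → 0 ≤ G x y)
    (ψ : S → ℝ) (hψ : ∀ x : S, 0 < ψ x)
    (t : ℝ)
    (m : ℝ → S → ℝ) (hm : ∀ s : ℝ, m s = (NormedSpace.exp (s • G)).mulVec ψ)
    (P : ℝ → ℝ → (S → ℝ) → S → ℝ)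
    (hP : ∀ (r s : ℝ) (f : S → ℝ) (x : S),
      P r s f x =
        (NormedSpace.exp ((s - r) • G)).mulVec (fun y => m (t - s) y * f y) x
          / m (t - r) x)
    (A : ℝ → (S → ℝ) → S → ℝ)
    (hA : ∀ (s : ℝ) (f : S → ℝ) (x : S),
      A s f x =
        (G.mulVec (fun y => m (t - s) y * f y) x - G.mulVec (m (t - s)) x * f x)
          / m (t - s) x) :
    -- (i) `P_{r,r} = id` and `s ↦ P_{r,s} f x` solves `d/ds P_{r,s} f = P_{r,s}(A_s f)` on `[r,t]`
    (∀ r : ℝ, 0 ≤ r → r ≤ t →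
      (∀ (f : S → ℝ) (x : S), P r r f x = f x) ∧
      (∀ (f : S → ℝ) (x : S), ∀ s ∈ Set.Icc r t,
        HasDerivWithinAt (fun u => P r u f x) (P r s (A s f) x) (Set.Icc r t) s)) ∧
    -- (ii) uniqueness among families of linear operators
    (∀ U : ℝ → ℝ → (S → ℝ) →ₗ[ℝ] (S → ℝ),
      (∀ r : ℝ, 0 ≤ r → r ≤ t → U r r = LinearMap.id) →
      (∀ r : ℝ, 0 ≤ r → r ≤ t → ∀ (f : S → ℝ) (x : S), ∀ s ∈ Set.Icc r t,
        HasDerivWithinAt (fun u => U r u f x) (U r s (A s f) x) (Set.Icc r t) s) →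
      ∀ r s : ℝ, 0 ≤ r → r ≤ s → s ≤ t → ∀ (f : S → ℝ) (x : S),
        U r s f x = P r s f x) := by
  have hP' : P = fun r s => spinePropagator G m t r s := by
    funext r s f x; exact hP r s f x
  have hA' : A = fun s f => doobGenerator G (m (t - s)) f := by
    funext s f x; exact hA s f x
  subst hP' hA'
  have hm_deriv : ∀ u, HasDerivAt m (G *ᵥ m u) u := fun u => by
    rw [show m = fun s => exp (s • G) *ᵥ ψ from funext hm]
    refine (hasDerivAt_exp_smul_mulVec G (hasDerivAt_id' u)
      (hasDerivAt_const u ψ)).congr_deriv ?_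
    simp only [one_smul, add_zero, mulVec_exp_smul_mulVec]
  have hm_ne : ∀ u, 0 ≤ u → ∀ x, m u x ≠ 0 := fun u hu x =>
    (hm u ▸ exp_smul_mulVec_pos hG hψ hu x).ne'
  refine ⟨fun r _ hrt => ⟨fun f x => ?_, fun f x s hs => ?_⟩,
    fun U hU₀ hU r s hr hrs hst f x => ?_⟩
  · exact congrFun (spinePropagator_self (hm_ne _ (sub_nonneg.2 hrt)) f) x
  · exact (hasDerivAt_pi.1 (hasDerivAt_spinePropagator_right (hm_deriv _)
      (hm_ne _ (sub_nonneg.2 hs.2)) r f) x).hasDerivWithinAt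
  · exact congrFun (eq_spinePropagator_of_hasDerivWithinAt hm_deriv hm_ne
      (hU₀ r hr (hrs.trans hst)) (hU r hr (hrs.trans hst)) ⟨hrs, hst⟩ f) x

/-- The semigroup `P_{r,s} f (x) = (exp ((s−r)G)(m_{t−s}·f)) x / m_{t−r} x` (with
`m_s = exp (sG) ψ`) satisfies `P_{r,r} = id` and the forward evolution equation
`d/ds P_{r,s} f = P_{r,s}(A_s f)` on `[r,t]`, where
`A_s f (x) = (G (m_{t−s}·f) x − (G m_{t−s}) x · f x)/m_{t−s} x`; moreover it is the
unique family of linear operators with these two properties. -/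
theorem inhomogeneous_semigroup_evolution_and_uniqueness
    {S : Type*} [Fintype S] [Nonempty S] [DecidableEq S]
    (G : Matrix S S ℝ) (hG : ∀ x y : S, x ≠ y → 0 ≤ G x y)
    (ψ : S → ℝ) (hψ : ∀ x : S, 0 < ψ x)
    (t : ℝ) (ht : 0 < t)
    (m : ℝ → S → ℝ) (hm : ∀ s : ℝ, m s = (NormedSpace.exp (s • G)).mulVec ψ)
    (P : ℝ → ℝ → (S → ℝ) → S → ℝ)
    (hP : ∀ (r s : ℝ) (f : S → ℝ) (x : S),
      P r s f x =
        (NormedSpace.exp ((s - r) • G)).mulVec (fun y => m (t - s) y * f y) x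
          / m (t - r) x)
    (A : ℝ → (S → ℝ) → S → ℝ)
    (hA : ∀ (s : ℝ) (f : S → ℝ) (x : S),
      A s f x =
        (G.mulVec (fun y => m (t - s) y * f y) x - G.mulVec (m (t - s)) x * f x)
          / m (t - s) x) :
    -- (i) `P_{r,r} = id` and `s ↦ P_{r,s} f x` solves `d/ds P_{r,s} f = P_{r,s}(A_s f)` on `[r,t]`
    (∀ r : ℝ, 0 ≤ r → r ≤ t →
      (∀ (f : S → ℝ) (x : S), P r r f x = f x) ∧
      (∀ (f : S → ℝ) (x : S), ∀ s ∈ Set.Icc r t,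
        HasDerivWithinAt (fun u => P r u f x) (P r s (A s f) x) (Set.Icc r t) s)) ∧
    -- (ii) uniqueness among families of linear operators
    (∀ U : ℝ → ℝ → (S → ℝ) →ₗ[ℝ] (S → ℝ),
      (∀ r : ℝ, 0 ≤ r → r ≤ t → U r r = LinearMap.id) →
      (∀ r : ℝ, 0 ≤ r → r ≤ t → ∀ (f : S → ℝ) (x : S), ∀ s ∈ Set.Icc r t,
        HasDerivWithinAt (fun u => U r u f x) (U r s (A s f) x) (Set.Icc r t) s) →
      ∀ r s : ℝ, 0 ≤ r → r ≤ s → s ≤ t → ∀ (f : S → ℝ) (x : S),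
        U r s f x = P r s f x) :=
  inhomogeneous_semigroup_evolution_and_uniqueness_general G hG ψ hψ t m hm P hP A hA
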